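/- Let γ_n : S¹ → ℙ (n ∈ ℕ) be closed curves in the punctured sphere ℙ, each nullhomotopic in ℙ, and suppose γ_n converges uniformly (with respect to the Euclidean metric of ℝ³) to a continuous map γ : S¹ → ℙ. Then γ is nullhomotopic in ℙ. -/

import Mathlib

/-!
Since `γ` is compact and the punctures form a closed set, `γ` stays at some distance `r > 0`
from them. Choose `n` with `γs n` uniformly `ε`-close to `γ`, `ε = min (r/2) 1`. Radially
projecting the straight-line homotopy from `γ` to `γs n` onto the sphere moves no point by more
than `2ε ≤ r` away from `γ` and never passes through `0`, so it is a homotopy in `ℙ`, and `γ`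
inherits nullhomotopy from `γs n`.
-/

open Real ContinuousMap

noncomputable section

abbrev E3 := EuclideanSpace ℝ (Fin 3)

def sphere2 : Set E3 := Metric.sphere 0 1

def eqPt (θ : ℝ) : E3 := (WithLp.equiv 2 _).symm ![Real.cos θ, Real.sin θ, 0]

lemma eqPt_mem_sphere2 (θ : ℝ) : eqPt θ ∈ sphere2 := by
  simp only [sphere2, mem_sphere_iff_norm, sub_zero, eqPt]
  rw [EuclideanSpace.norm_eq]
  simp [Fin.sum_univ_three, WithLp.equiv_symm_apply, PiLp.toLp_apply]

def puncture (k : ℕ) (j : Fin k) : E3 := eqPt (2 * π * j / k)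

def Pset (k : ℕ) : Set E3 := sphere2 \ Set.range (puncture k)

abbrev PSub (k : ℕ) := ↥(Pset k)

def equatorSet (k : ℕ) : Set E3 := {x ∈ Pset k | x 2 = 0}

def arcSide (k : ℕ) (j : Fin k) : Set E3 :=
  {x | ∃ θ : ℝ, 2 * π * j / k < θ ∧ θ < 2 * π * (j + 1) / k ∧ x = eqPt θ}

def hemi : Bool → Set E3
  | true => {x | 0 < x 2}
  | false => {x | x 2 < 0}

structure IsNice (k : ℕ) (γ : C(Circle, PSub k)) (m : ℕ) (t : ℕ → ℝ) (σ : ℕ → Fin k) : Prop where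
  m_pos : 1 ≤ m
  mono : StrictMono t
  t_periodic : ∀ i, t (i + 2 * m) = t i + 2 * π
  σ_periodic : ∀ i, σ (i + 2 * m) = σ i
  preimage : ∀ z : Circle, ((γ z : E3) ∈ equatorSet k) ↔ ∃ i, z = Circle.exp (t i)
  code : ∀ i, ((γ (Circle.exp (t i)) : PSub k) : E3) ∈ arcSide k (σ i)
  adjacent : ∀ i, σ i ≠ σ (i + 1)
  alternate : ∃ b : Bool, ∀ i s, t i < s → s < t (i + 1) →
      ((γ (Circle.exp s) : PSub k) : E3) ∈ hemi (if Even i then b else !b)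

def IsNullCurve {k : ℕ} (γ : C(Circle, PSub k)) : Prop :=
  ∃ x, γ.Homotopic (ContinuousMap.const Circle x)

def NullLoop {X : Type*} [TopologicalSpace X] {x : X} (p : Path x x) : Prop :=
  p.Homotopic (Path.refl x)

def arcPath {X : Type*} [TopologicalSpace X] (δ : C(Circle, X)) (a b : ℝ) :
    Path (δ (Circle.exp a)) (δ (Circle.exp b)) where
  toFun u := δ (Circle.exp (a + u * (b - a)))
  continuous_toFun := by fun_prop
  source' := by simp
  target' := by
    have h : a + (1 : ℝ) * (b - a) = b := by ring
    simp [h]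

def AdmissibleWith (k m : ℕ) (t : ℕ → ℝ) (σ : ℕ → Fin k)
    (γ δ : C(Circle, PSub k)) (s s' : ℕ → ℝ) : Prop :=
  (∀ i, s i ≤ s' i) ∧
  (∀ i, s' i < s (i + 1)) ∧
  (∀ i, s (i + 2 * m) = s i + 2 * π) ∧
  (∀ i, s' (i + 2 * m) = s' i + 2 * π) ∧
  (∀ i, ((δ (Circle.exp (s i)) : PSub k) : E3) ∈ arcSide k (σ i) ∧
        ((δ (Circle.exp (s' i)) : PSub k) : E3) ∈ arcSide k (σ i)) ∧
  (∀ i, ∃ q : Path (δ (Circle.exp (s' i))) (δ (Circle.exp (s i))),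
      (∀ u, ((q u : PSub k) : E3) ∈ arcSide k (σ i)) ∧
      NullLoop ((arcPath δ (s i) (s' i)).trans q)) ∧
  (∀ i, ∃ q₁ : Path (γ (Circle.exp (t (i + 1)))) (δ (Circle.exp (s (i + 1)))),
        ∃ q₂ : Path (δ (Circle.exp (s' i))) (γ (Circle.exp (t i))),
      (∀ u, ((q₁ u : PSub k) : E3) ∈ arcSide k (σ (i + 1))) ∧
      (∀ u, ((q₂ u : PSub k) : E3) ∈ arcSide k (σ i)) ∧
      NullLoop ((arcPath γ (t i) (t (i + 1))).trans
        (q₁.trans (((arcPath δ (s' i) (s (i + 1))).symm).trans q₂))))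

def Admissible (k m : ℕ) (t : ℕ → ℝ) (σ : ℕ → Fin k) (γ δ : C(Circle, PSub k)) : Prop :=
  ∃ s s' : ℕ → ℝ, AdmissibleWith k m t σ γ δ s s'

open Metric

theorem dist_inv_norm_smul_le {E : Type*} [NormedAddCommGroup E] [NormedSpace ℝ E]
    {x : E} (hx : ‖x‖ = 1) (v : E) : dist (‖v‖⁻¹ • v) x ≤ 2 * dist v x := by
  have hproj : dist (‖v‖⁻¹ • v) v ≤ dist v x := by
    rcases eq_or_ne v 0 with rfl | hv
    · simp
    calc dist (‖v‖⁻¹ • v) v = |(‖v‖⁻¹ - 1) * ‖v‖| := by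
          rw [dist_eq_norm, abs_mul, abs_norm, ← Real.norm_eq_abs, ← norm_smul, sub_smul, one_smul]
      _ = |‖x‖ - ‖v‖| := by rw [sub_mul, inv_mul_cancel₀ (norm_ne_zero_iff.mpr hv), one_mul, hx]
      _ ≤ dist v x := by rw [dist_comm, dist_eq_norm]; exact abs_norm_sub_norm_le x v
  linarith [dist_triangle (‖v‖⁻¹ • v) v x]

theorem ContinuousMap.homotopic_of_forall_dist_lt {X E : Type*} [TopologicalSpace X]
    [NormedAddCommGroup E] [NormedSpace ℝ E] {S : Set E} (hS : S ⊆ sphere 0 1)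
    {f g : C(X, S)} {ε : ℝ} (hε : ε ≤ 1)
    (hnhds : ∀ x, ∀ y ∈ sphere (0 : E) 1, dist y (f x) < 2 * ε → y ∈ S)
    (hfg : ∀ x, dist (f x : E) (g x) < ε) : f.Homotopic g := by
  have hf1 (x : X) : ‖(f x : E)‖ = 1 := mem_sphere_zero_iff_norm.mp (hS (f x).2)
  have hg1 (x : X) : ‖(g x : E)‖ = 1 := mem_sphere_zero_iff_norm.mp (hS (g x).2)
  set v : unitInterval × X → E := fun p => AffineMap.lineMap (f p.2 : E) (g p.2) (p.1 : ℝ)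
  have hv_dist (p : unitInterval × X) : dist (v p) (f p.2) < ε := by
    rw [dist_lineMap_left, Real.norm_eq_abs, abs_of_nonneg p.1.2.1]
    exact (mul_le_of_le_one_left dist_nonneg p.1.2.2).trans_lt (hfg p.2)
  have hv_ne (p : unitInterval × X) : v p ≠ 0 := by
    intro h
    have := hv_dist p
    rw [h, dist_comm, dist_zero_right, hf1] at this
    linarith
  have hv_cont : Continuous v := by
    simp only [v, AffineMap.lineMap_apply_module]
    fun_prop
  refine ⟨{
    toFun := fun p => ⟨‖v p‖⁻¹ • v p, hnhds p.2 _ ?_ ?_⟩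
    continuous_toFun := ((hv_cont.norm.inv₀ fun p => norm_ne_zero_iff.mpr (hv_ne p)).smul
      hv_cont).subtype_mk _
    map_zero_left := fun x => ?_
    map_one_left := fun x => ?_ }⟩
  · rw [mem_sphere_zero_iff_norm, norm_smul, norm_inv, norm_norm,
      inv_mul_cancel₀ (norm_ne_zero_iff.mpr (hv_ne p))]
  · calc dist (‖v p‖⁻¹ • v p) (f p.2) ≤ 2 * dist (v p) (f p.2) :=
          dist_inv_norm_smul_le (hf1 p.2) _
      _ < 2 * ε := by linarith [hv_dist p]
  · ext; simp [v, hf1]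
  · ext; simp [v, hg1]

theorem ContinuousMap.exists_pos_forall_dist_lt_notMem {X E : Type*} [TopologicalSpace X]
    [CompactSpace X] [PseudoMetricSpace E] {C : Set E} (hC : IsClosed C) (f : C(X, E))
    (hf : ∀ x, f x ∉ C) : ∃ r > 0, ∀ x y, dist y (f x) < r → y ∉ C := by
  obtain ⟨r, hr, hsub⟩ := (isCompact_range f.continuous).exists_thickening_subset_open
    hC.isOpen_compl (Set.range_subset_iff.mpr hf)
  exact ⟨r, hr, fun x y hy => hsub (mem_thickening_iff.mpr ⟨f x, Set.mem_range_self x, hy⟩)⟩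

theorem stmt8_general (k : ℕ) (γs : ℕ → C(Circle, PSub k)) (γ : C(Circle, PSub k))
    (hnull : ∀ n, IsNullCurve (γs n))
    (hconv : TendstoUniformly (fun n z => ((γs n z : PSub k) : E3))
      (fun z => ((γ z : PSub k) : E3)) Filter.atTop) :
    IsNullCurve γ := by
  obtain ⟨r, hr, hfar⟩ := ContinuousMap.exists_pos_forall_dist_lt_notMem
    (Set.finite_range (puncture k)).isClosed ⟨fun z => (γ z : E3), by fun_prop⟩
    (fun z => (γ z).2.2)
  set ε := min (r / 2) 1
  obtain ⟨n, hn⟩ := (tendstoUniformly_iff.mp hconv ε (by positivity)).exists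
  have hγ : γ.Homotopic (γs n) :=
    ContinuousMap.homotopic_of_forall_dist_lt (fun _ hy => hy.1) (min_le_right _ _)
      (fun z y hy hyz => ⟨hy, hfar z y (hyz.trans_le (by linarith [min_le_left (r / 2) 1]))⟩) hn
  obtain ⟨x, hx⟩ := hnull n
  exact ⟨x, hγ.trans hx⟩

/-- A uniform limit (in the Euclidean metric of `ℝ³`) of nullhomotopic closed curves in
the punctured sphere is nullhomotopic. -/
theorem stmt8 (k : ℕ) (hk : 3 ≤ k) (γs : ℕ → C(Circle, PSub k)) (γ : C(Circle, PSub k))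
    (hnull : ∀ n, IsNullCurve (γs n))
    (hconv : TendstoUniformly (fun n z => ((γs n z : PSub k) : E3))
      (fun z => ((γ z : PSub k) : E3)) Filter.atTop) :
    IsNullCurve γ :=
  stmt8_general k γs γ hnull hconv
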